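/- Let (X,ψ) be a weighted space and (Y,‖·‖_Y) a Banach space. For every w ∈ 𝓑_ψ(X;Y), the tilted weight function ψ_w: X → (0,∞) defined by ψ_w(x) = ψ(x)/(1 + ‖w(x)‖_Y) is again an admissible weight function on X, i.e. every pre-image ψ_w^{-1}((0,R]) is compact for R > 0. -/

import Mathlib

open Filter Topology

/-- `f` belongs to `𝓑_ψ(X;Y)`, the closure of the bounded continuous maps `C⁰_b(X;Y)`
with respect to the weighted norm `‖f‖_{𝓑_ψ} = sup_x ‖f x‖ / ψ x`. -/
def MemBpsi {X : Type*} [TopologicalSpace X] {Y : Type*} [NormedAddCommGroup Y]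
    (ψ : X → ℝ) (f : X → Y) : Prop :=
  ∀ ε > (0 : ℝ), ∃ g : X → Y, Continuous g ∧ (∃ C : ℝ, ∀ x, ‖g x‖ ≤ C) ∧
    ∀ x, ‖f x - g x‖ ≤ ε * ψ x

/-! Approximating `w` within `ψ / (2R)` by a bounded map shows that the sublevel set
`{ψ_w ≤ R}` lies inside some compact sublevel set `{ψ ≤ M}`. On `{ψ ≤ M}` the approximation
error is uniformly small, so `w` is continuous there, while `ψ` is lower semicontinuous because
its sublevel sets are closed. Hence `{ψ_w ≤ R} = {x ∈ {ψ ≤ M} | ψ x - R (1 + ‖w x‖) ≤ 0}` is a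
closed subset of a compact set. -/

open Set

theorem lowerSemicontinuous_of_isClosed_sublevel {X : Type*} [TopologicalSpace X] {ψ : X → ℝ}
    (hpos : ∀ x, 0 < ψ x) (hclosed : ∀ R > 0, IsClosed {x | ψ x ≤ R}) :
    LowerSemicontinuous ψ := by
  refine lowerSemicontinuous_iff_isClosed_preimage.2 fun R => ?_
  rcases le_or_gt R 0 with hR | hR
  · convert isClosed_empty
    exact eq_empty_of_forall_notMem fun x hx => (hpos x).not_ge (le_trans hx hR)
  · exact hclosed R hR

theorem IsCompact.inter_preimage_Iic_of_lowerSemicontinuousOn {X γ : Type*} [TopologicalSpace X]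
    [LinearOrder γ] {s : Set X} {f : X → γ} (hs : IsCompact s) (hf : LowerSemicontinuousOn f s)
    (b : γ) : IsCompact (s ∩ f ⁻¹' Iic b) := by
  obtain ⟨v, hv, hsv⟩ := lowerSemicontinuousOn_iff_preimage_Iic.1 hf b
  exact hsv ▸ hs.inter_right hv

namespace MemBpsi

variable {X Y : Type*} [TopologicalSpace X] [NormedAddCommGroup Y] {ψ : X → ℝ} {w : X → Y}

theorem exists_norm_le (hw : MemBpsi ψ w) {ε : ℝ} (hε : 0 < ε) :
    ∃ C, ∀ x, ‖w x‖ ≤ C + ε * ψ x := by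
  obtain ⟨g, -, ⟨C, hC⟩, hwg⟩ := hw ε hε
  exact ⟨C, fun x => (norm_le_norm_add_norm_sub' (w x) (g x)).trans (add_le_add (hC x) (hwg x))⟩

theorem continuousOn (hw : MemBpsi ψ w) {s : Set X} {M : ℝ} (hM : ∀ x ∈ s, ψ x ≤ M) :
    ContinuousOn w s := by
  refine continuousOn_of_uniform_approx_of_continuousOn fun u hu => ?_
  obtain ⟨ε, hε, hεu⟩ := Metric.mem_uniformity_dist.1 hu
  set M' := max M 0 + 1
  have hM' : 0 < M' := by positivity
  obtain ⟨g, hg, -, hwg⟩ := hw (ε / M') (div_pos hε hM')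
  refine ⟨g, hg.continuousOn, fun x hx => hεu ?_⟩
  calc dist (w x) (g x) = ‖w x - g x‖ := dist_eq_norm _ _
    _ ≤ ε / M' * ψ x := hwg x
    _ ≤ ε / M' * max M 0 := by gcongr; exact (hM x hx).trans (le_max_left _ _)
    _ < ε / M' * M' := by gcongr; exact lt_add_one _
    _ = ε := div_mul_cancel₀ ε hM'.ne'

end MemBpsi

/-- The tilted weight `ψ_w` of the paper. -/
noncomputable def tiltedWeight {X Y : Type*} [NormedAddCommGroup Y] (ψ : X → ℝ) (w : X → Y)
    (x : X) : ℝ :=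
  ψ x / (1 + ‖w x‖)

section TiltedWeight

variable {X Y : Type*} [NormedAddCommGroup Y] {ψ : X → ℝ} {w : X → Y}

theorem tiltedWeight_pos (hpos : ∀ x, 0 < ψ x) (x : X) : 0 < tiltedWeight ψ w x :=
  div_pos (hpos x) (by positivity)

theorem tiltedWeight_le_iff {x : X} {R : ℝ} :
    tiltedWeight ψ w x ≤ R ↔ ψ x ≤ R * (1 + ‖w x‖) :=
  div_le_iff₀ (by positivity)

variable [TopologicalSpace X]

theorem MemBpsi.exists_le_of_tiltedWeight_le (hw : MemBpsi ψ w) {R : ℝ} (hR : 0 < R) :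
    ∃ M > 0, ∀ x, tiltedWeight ψ w x ≤ R → ψ x ≤ M := by
  obtain ⟨C, hC⟩ := hw.exists_norm_le (ε := 1 / (2 * R)) (by positivity)
  refine ⟨2 * R * (1 + |C|), by positivity, fun x hx => ?_⟩
  have hwx : ‖w x‖ ≤ |C| + 1 / (2 * R) * ψ x := (hC x).trans (by gcongr; exact le_abs_self C)
  have hR' : R * (1 / (2 * R) * ψ x) = ψ x / 2 := by field_simp
  nlinarith [tiltedWeight_le_iff.1 hx, mul_le_mul_of_nonneg_left hwx hR.le]

theorem MemBpsi.isCompact_tiltedWeight_sublevel [T2Space X] (hpos : ∀ x, 0 < ψ x)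
    (hadm : ∀ R > 0, IsCompact {x | ψ x ≤ R}) (hw : MemBpsi ψ w) {R : ℝ} (hR : 0 < R) :
    IsCompact {x | tiltedWeight ψ w x ≤ R} := by
  obtain ⟨M, hM, hbound⟩ := hw.exists_le_of_tiltedWeight_le hR
  set K := {x | ψ x ≤ M}
  have hψ : LowerSemicontinuous ψ :=
    lowerSemicontinuous_of_isClosed_sublevel hpos fun r hr => (hadm r hr).isClosed
  have hwK : ContinuousOn w K := hw.continuousOn fun _ hx => hx
  have hf : LowerSemicontinuousOn (fun x => ψ x + -(R * (1 + ‖w x‖))) K :=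
    (hψ.lowerSemicontinuousOn K).add
      ((continuousOn_const.mul (continuousOn_const.add hwK.norm)).neg.lowerSemicontinuousOn)
  convert (hadm M hM).inter_preimage_Iic_of_lowerSemicontinuousOn hf 0 using 1
  ext x
  simp only [mem_ofPred_eq, mem_inter_iff, mem_preimage, mem_Iic, tiltedWeight_le_iff]
  constructor
  · intro hx
    exact ⟨hbound x (tiltedWeight_le_iff.2 hx), by linarith⟩
  · rintro ⟨-, hx⟩
    linarith

end TiltedWeight

theorem tilted_weight_admissible_general
    {X : Type*} [TopologicalSpace X] [T2Space X]
    {Y : Type*} [NormedAddCommGroup Y]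
    (ψ : X → ℝ) (hψpos : ∀ x, 0 < ψ x)
    (hψadm : ∀ R > 0, IsCompact {x : X | ψ x ≤ R})
    (w : X → Y) (hw : MemBpsi ψ w) :
    (∀ x, 0 < ψ x / (1 + ‖w x‖)) ∧
    (∀ R > 0, IsCompact {x : X | ψ x / (1 + ‖w x‖) ≤ R}) :=
  ⟨tiltedWeight_pos hψpos, fun _ hR => hw.isCompact_tiltedWeight_sublevel hψpos hψadm hR⟩

/-- **(Lemma 3.8: tilted weights are admissible).**
Let `(X, ψ)` be a weighted space and `(Y, ‖·‖_Y)` a Banach space.  For every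
`w ∈ 𝓑_ψ(X;Y)`, the tilted weight function `ψ_w(x) = ψ(x)/(1 + ‖w x‖)` is again an
admissible weight function on `X`: it is strictly positive, and every pre-image
`ψ_w⁻¹((0,R])` is compact for `R > 0`. -/
theorem tilted_weight_admissible
    {X : Type*} [TopologicalSpace X] [T2Space X] [CompletelyRegularSpace X]
    {Y : Type*} [NormedAddCommGroup Y] [NormedSpace ℝ Y] [CompleteSpace Y]
    (ψ : X → ℝ) (hψpos : ∀ x, 0 < ψ x)
    (hψadm : ∀ R > 0, IsCompact {x : X | ψ x ≤ R})
    (w : X → Y) (hw : MemBpsi ψ w) :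
    (∀ x, 0 < ψ x / (1 + ‖w x‖)) ∧
    (∀ R > 0, IsCompact {x : X | ψ x / (1 + ‖w x‖) ≤ R}) :=
  tilted_weight_admissible_general ψ hψpos hψadm w hw
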